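/- Let R be a commutative reduced ring that is not an integral domain and has exactly n minimal prime ideals (n finite, n ≥ 2). Then the chromatic number of the annihilating-ideal graph equals the clique number of the annihilating-ideal graph equals n. -/

import Mathlib

/-- The annihilating-ideal graph of a commutative ring `R`. -/
def annihilatingIdealGraph (R : Type*) [CommRing R] :
    SimpleGraph {I : Ideal R // I ≠ ⊥ ∧ Submodule.annihilator I ≠ ⊥} where
  Adj I J := I ≠ J ∧ (I : Ideal R) * (J : Ideal R) = ⊥
  symm := ⟨fun I J h => ⟨h.1.symm, by rw [mul_comm]; exact h.2⟩⟩
  loopless := ⟨fun I h => h.1 rfl⟩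

/-!
In a reduced ring the minimal primes `p₁, …, pₙ` intersect in `0`. Colouring a nonzero ideal `I`
by some `pᵢ` with `I ⊈ pᵢ` is proper: if `IJ = 0` then `IJ ⊆ pᵢ`, so `J ⊆ pᵢ` and `J` gets
another colour. Conversely the ideals `eᵢ = ⋂_{j ≠ i} pⱼ` are nonzero by prime avoidance
(`pᵢ` is minimal) and satisfy `eᵢeⱼ ⊆ ⋂ₖ pₖ = 0` for `i ≠ j`, so they form an `n`-clique.
-/

namespace Ideal

variable {R : Type*} [CommRing R]

theorem sInf_minimalPrimes_eq_bot [IsReduced R] : sInf (minimalPrimes R) = ⊥ :=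
  sInf_minimalPrimes.trans radical_bot_of_isReduced

theorem exists_mem_minimalPrimes_not_le [IsReduced R] {I : Ideal R} (hI : I ≠ ⊥) :
    ∃ p ∈ minimalPrimes R, ¬I ≤ p := by
  by_contra! h
  exact hI (le_bot_iff.1 (sInf_minimalPrimes_eq_bot (R := R) ▸ le_sInf h))

theorem mul_self_ne_bot [IsReduced R] {I : Ideal R} (hI : I ≠ ⊥) : I * I ≠ ⊥ := by
  rwa [← sq, Ne, pow_eq_bot two_ne_zero]

theorem annihilator_ne_bot_of_mul_eq_bot {I J : Ideal R} (hJ : J ≠ ⊥) (h : J * I = ⊥) :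
    Submodule.annihilator I ≠ ⊥ :=
  fun hI => hJ (le_bot_iff.1 (hI ▸ Submodule.le_annihilator_iff.2 h))

theorem finsetInf_erase_not_le {S : Finset (Ideal R)} (hS : ∀ q ∈ S, q.IsPrime) {p : Ideal R}
    (hp : p ∈ minimalPrimes R) : ¬(S.erase p).inf id ≤ p := by
  rw [hp.1.1.inf_le']
  rintro ⟨q, hq, hqp⟩
  obtain ⟨hqp', hqS⟩ := Finset.mem_erase.1 hq
  exact hqp' (le_antisymm hqp (hp.2 ⟨hS q hqS, bot_le⟩ hqp))

theorem finsetInf_erase_mul_finsetInf_erase_le (S : Finset (Ideal R)) {p q : Ideal R}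
    (hp : p ∈ S) (hpq : p ≠ q) : (S.erase p).inf id * (S.erase q).inf id ≤ S.inf id := by
  refine mul_le_inf.trans (Finset.le_inf fun r hr => ?_)
  by_cases hrp : r = p
  · subst hrp
    exact inf_le_right.trans (Finset.inf_le (Finset.mem_erase.2 ⟨hpq, hp⟩))
  · exact inf_le_left.trans (Finset.inf_le (Finset.mem_erase.2 ⟨hrp, hr⟩))

variable [Fintype (minimalPrimes R)]

noncomputable def infOtherMinimalPrimes (p : Ideal R) : Ideal R :=
  ((minimalPrimes R).toFinset.erase p).inf id

theorem infOtherMinimalPrimes_ne_bot {p : Ideal R} (hp : p ∈ minimalPrimes R) :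
    infOtherMinimalPrimes p ≠ ⊥ := fun h =>
  finsetInf_erase_not_le (fun _ hq => (Set.mem_toFinset.1 hq).1.1) hp (h ▸ bot_le)

theorem infOtherMinimalPrimes_mul_eq_bot [IsReduced R] {p q : Ideal R}
    (hp : p ∈ minimalPrimes R) (hpq : p ≠ q) :
    infOtherMinimalPrimes p * infOtherMinimalPrimes q = ⊥ := by
  have hinf : (minimalPrimes R).toFinset.inf id = ⊥ := by
    rw [Finset.inf_id_eq_sInf, Set.coe_toFinset, sInf_minimalPrimes_eq_bot]
  exact le_bot_iff.1 (hinf ▸ finsetInf_erase_mul_finsetInf_erase_le _ (Set.mem_toFinset.2 hp) hpq)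

end Ideal

theorem SimpleGraph.exists_isNClique_of_pairwise_adj {V ι : Type*} [Fintype ι]
    {G : SimpleGraph V} {f : ι → V} (hf : Pairwise fun i j => G.Adj (f i) (f j)) :
    ∃ s, G.IsNClique (Fintype.card ι) s := by
  refine ⟨_, isNClique_map_copy_top ⟨⟨f, fun h => hf h⟩, fun i j hij => ?_⟩⟩
  by_contra hne
  have hadj : G.Adj (f i) (f j) := hf hne
  have hij : f i = f j := hij
  exact G.loopless.irrefl (f j) (hij ▸ hadj)

namespace annihilatingIdealGraph

variable {R : Type*} [CommRing R] [IsReduced R]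

theorem exists_isNClique_of_pairwise_mul_eq_bot {ι : Type*} [Fintype ι] [Nontrivial ι]
    {f : ι → Ideal R} (hf : ∀ i, f i ≠ ⊥) (hmul : Pairwise fun i j => f i * f j = ⊥) :
    ∃ s, (annihilatingIdealGraph R).IsNClique (Fintype.card ι) s := by
  let v (i : ι) : {I : Ideal R // I ≠ ⊥ ∧ Submodule.annihilator I ≠ ⊥} :=
    ⟨f i, hf i, have ⟨j, hj⟩ := exists_ne i
      Ideal.annihilator_ne_bot_of_mul_eq_bot (hf j) (hmul hj)⟩
  refine SimpleGraph.exists_isNClique_of_pairwise_adj (f := v) fun i j hij => ⟨?_, hmul hij⟩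
  intro hv
  have hfij : f i = f j := congrArg Subtype.val hv
  have hzero : f i * f j = ⊥ := hmul hij
  rw [← hfij] at hzero
  exact Ideal.mul_self_ne_bot (hf i) hzero

theorem exists_isNClique_card_minimalPrimes [Fintype (minimalPrimes R)]
    (h : 2 ≤ Fintype.card (minimalPrimes R)) :
    ∃ s, (annihilatingIdealGraph R).IsNClique (Fintype.card (minimalPrimes R)) s :=
  have := Fintype.one_lt_card_iff_nontrivial.1 h
  exists_isNClique_of_pairwise_mul_eq_bot (f := fun p => Ideal.infOtherMinimalPrimes p.1)
    (fun p => Ideal.infOtherMinimalPrimes_ne_bot p.2)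
    fun p _ hpq => Ideal.infOtherMinimalPrimes_mul_eq_bot p.2 (Subtype.coe_ne_coe.2 hpq)

noncomputable def minimalPrimeColoring : (annihilatingIdealGraph R).Coloring (minimalPrimes R) :=
  have avoid (I : {I : Ideal R // I ≠ ⊥ ∧ Submodule.annihilator I ≠ ⊥}) :=
    Ideal.exists_mem_minimalPrimes_not_le I.2.1
  SimpleGraph.Coloring.mk (fun I => ⟨(avoid I).choose, (avoid I).choose_spec.1⟩)
    fun {I J} hIJ hc => by
      have hc : (avoid I).choose = (avoid J).choose := congrArg Subtype.val hc
      rcases (avoid I).choose_spec.1.1.1.mul_le.1 (hIJ.2.trans_le bot_le) with h | h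
      · exact (avoid I).choose_spec.2 h
      · exact (avoid J).choose_spec.2 (hc ▸ h)

end annihilatingIdealGraph

theorem AG_chromatic_eq_clique_eq_card_minimalPrimes_general {R : Type*} [CommRing R]
    [IsReduced R] (n : ℕ) (hn : 2 ≤ n)
    (hcard : (minimalPrimes R).ncard = n) (hfin : (minimalPrimes R).Finite) :
    (annihilatingIdealGraph R).chromaticNumber = n ∧
      (∃ s : Finset {I : Ideal R // I ≠ ⊥ ∧ Submodule.annihilator I ≠ ⊥},
        (annihilatingIdealGraph R).IsNClique n s) ∧
      ∀ s : Finset {I : Ideal R // I ≠ ⊥ ∧ Submodule.annihilator I ≠ ⊥},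
        (annihilatingIdealGraph R).IsClique ↑s → s.card ≤ n := by
  have := hfin.fintype
  have hcard_fintype : Fintype.card (minimalPrimes R) = n := by
    rw [← hcard, ← Nat.card_coe_set_eq, Nat.card_eq_fintype_card]
  subst hcard_fintype
  let C := annihilatingIdealGraph.minimalPrimeColoring (R := R)
  obtain ⟨s, hs⟩ := annihilatingIdealGraph.exists_isNClique_card_minimalPrimes hn
  refine ⟨le_antisymm C.colorable.chromaticNumber_le ?_, ⟨s, hs⟩,
    fun t ht => ht.card_le_of_coloring C⟩
  exact hs.card_eq ▸ hs.isClique.card_le_chromaticNumber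

/-- For a reduced non-domain ring with exactly `n ≥ 2` minimal primes,
`χ(AG(R)) = cl(AG(R)) = n`. -/
theorem AG_chromatic_eq_clique_eq_card_minimalPrimes {R : Type*} [CommRing R]
    [IsReduced R] (hnd : ¬ IsDomain R) (n : ℕ) (hn : 2 ≤ n)
    (hcard : (minimalPrimes R).ncard = n) (hfin : (minimalPrimes R).Finite) :
    (annihilatingIdealGraph R).chromaticNumber = n ∧
      (∃ s : Finset {I : Ideal R // I ≠ ⊥ ∧ Submodule.annihilator I ≠ ⊥},
        (annihilatingIdealGraph R).IsNClique n s) ∧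
      ∀ s : Finset {I : Ideal R // I ≠ ⊥ ∧ Submodule.annihilator I ≠ ⊥},
        (annihilatingIdealGraph R).IsClique ↑s → s.card ≤ n :=
  AG_chromatic_eq_clique_eq_card_minimalPrimes_general n hn hcard hfin
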